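/- arXiv:1402.4682 — 6 statements merged into one kernel-verified Lean document; each statement's English description precedes it below -/
import Mathlib

section
/- Let T be a bounded linear operator on a separable Banach space X and M a closed nontrivial subspace of X. If for any two nonempty relatively open sets U and V in M there exist n ∈ ℕ and α ∈ ℂ with |α| ≥ 1 such that T^{-n}(αU) ∩ V contains a nonempty relatively open subset of M, then for any two such open sets U, V there exist n ∈ ℕ and α with |α| ≥ 1 such that T^{-n}(αU) ∩ V is nonempty and T^n(M) ⊆ M. -/
/-! Once `T ^ n` maps a nonempty relatively open piece of `M` into `M`, linearity spreads this to
all of `M`: a submodule containing a nonempty relatively open subset of `M` contains `M`, since for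
`g` in that subset and `x ∈ M` the points `g + t • x` stay in it for some small `t ≠ 0`. -/

open Pointwise

/-- `U` is relatively open in `M` (as a subset of the ambient space). -/
def RelOpenIn {X : Type*} [TopologicalSpace X] (M U : Set X) : Prop :=
  ∃ O : Set X, IsOpen O ∧ U = O ∩ M

open Filter Topology

theorem Submodule.le_of_isOpen_inter_subset {𝕜 E : Type*} [NontriviallyNormedField 𝕜]
    [AddCommGroup E] [Module 𝕜 E] [TopologicalSpace E] [ContinuousAdd E] [ContinuousSMul 𝕜 E]
    {M P : Submodule 𝕜 E} {O : Set E} (hO : IsOpen O) (hne : (O ∩ M).Nonempty)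
    (hsub : O ∩ M ⊆ P) : M ≤ P := by
  obtain ⟨g, hgO, hgM⟩ := hne
  intro x hx
  have hnear : ∀ᶠ t : 𝕜 in 𝓝[≠] 0, g + t • x ∈ O := by
    have hcont : Continuous fun t : 𝕜 => g + t • x := by fun_prop
    refine nhdsWithin_le_nhds (hcont.continuousAt.preimage_mem_nhds ?_)
    simpa using hO.mem_nhds hgO
  obtain ⟨t, htO, ht⟩ := (hnear.and self_mem_nhdsWithin).exists
  have hgP : g ∈ P := hsub ⟨hgO, hgM⟩
  have hshiftP : g + t • x ∈ P := hsub ⟨htO, M.add_mem hgM (M.smul_mem t hx)⟩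
  have htxP : t • x ∈ P := by simpa using P.sub_mem hshiftP hgP
  exact (P.smul_mem_iff ht).mp htxP

theorem Submodule.le_of_relOpenIn_subset {𝕜 E : Type*} [NontriviallyNormedField 𝕜]
    [AddCommGroup E] [Module 𝕜 E] [TopologicalSpace E] [ContinuousAdd E] [ContinuousSMul 𝕜 E]
    {M P : Submodule 𝕜 E} {G : Set E} (hG : RelOpenIn (M : Set E) G) (hne : G.Nonempty)
    (hsub : G ⊆ P) : M ≤ P := by
  obtain ⟨O, hO, rfl⟩ := hG
  exact Submodule.le_of_isOpen_inter_subset hO hne hsub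

theorem stmt_0_general {X : Type*} [NormedAddCommGroup X] [NormedSpace ℂ X]
    (T : X →L[ℂ] X) (M : Submodule ℂ X)
    (htrans : ∀ U V : Set X, U ⊆ (M : Set X) → V ⊆ (M : Set X) →
      U.Nonempty → V.Nonempty → RelOpenIn (M : Set X) U → RelOpenIn (M : Set X) V →
      ∃ (n : ℕ) (α : ℂ), 1 ≤ ‖α‖ ∧ ∃ G : Set X, G.Nonempty ∧
        RelOpenIn (M : Set X) G ∧ G ⊆ (⇑(T ^ n)) ⁻¹' (α • U) ∩ V) :
    ∀ U V : Set X, U ⊆ (M : Set X) → V ⊆ (M : Set X) →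
      U.Nonempty → V.Nonempty → RelOpenIn (M : Set X) U → RelOpenIn (M : Set X) V →
      ∃ (n : ℕ) (α : ℂ), 1 ≤ ‖α‖ ∧ ((⇑(T ^ n)) ⁻¹' (α • U) ∩ V).Nonempty ∧
        ∀ x ∈ M, (T ^ n) x ∈ M := by
  intro U V hUM hVM hUne hVne hUo hVo
  obtain ⟨n, α, hα, G, hGne, hGo, hGsub⟩ := htrans U V hUM hVM hUne hVne hUo hVo
  have hαU : α • U ⊆ (M : Set X) := Set.smul_set_subset_iff.mpr fun u hu => M.smul_mem α (hUM hu)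
  have hGcomap : G ⊆ M.comap (T ^ n).toLinearMap := fun g hg => hαU (hGsub hg).1
  exact ⟨n, α, hα, hGne.mono hGsub, Submodule.le_of_relOpenIn_subset hGo hGne hGcomap⟩

theorem stmt_0 {X : Type*} [NormedAddCommGroup X] [NormedSpace ℂ X] [CompleteSpace X]
    [TopologicalSpace.SeparableSpace X]
    (T : X →L[ℂ] X) (M : Submodule ℂ X) (hMcl : IsClosed (M : Set X))
    (hMbot : M ≠ ⊥) (hMtop : M ≠ ⊤)
    (htrans : ∀ U V : Set X, U ⊆ (M : Set X) → V ⊆ (M : Set X) →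
      U.Nonempty → V.Nonempty → RelOpenIn (M : Set X) U → RelOpenIn (M : Set X) V →
      ∃ (n : ℕ) (α : ℂ), 1 ≤ ‖α‖ ∧ ∃ G : Set X, G.Nonempty ∧
        RelOpenIn (M : Set X) G ∧ G ⊆ (⇑(T ^ n)) ⁻¹' (α • U) ∩ V) :
    ∀ U V : Set X, U ⊆ (M : Set X) → V ⊆ (M : Set X) →
      U.Nonempty → V.Nonempty → RelOpenIn (M : Set X) U → RelOpenIn (M : Set X) V →
      ∃ (n : ℕ) (α : ℂ), 1 ≤ ‖α‖ ∧ ((⇑(T ^ n)) ⁻¹' (α • U) ∩ V).Nonempty ∧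
        ∀ x ∈ M, (T ^ n) x ∈ M :=
  stmt_0_general T M htrans
end

section
/- If T is M-disk transitive, then T is M-diskcyclic, i.e., there exists x ∈ X such that {α T^n x : n ∈ ℕ, α ∈ ℂ, |α| ≤ 1} ∩ M is dense in M. -/
open Pointwise

/-- The disk orbit of `x` under `T`. -/
def diskOrb {X : Type*} [NormedAddCommGroup X] [NormedSpace ℂ X] (T : X →L[ℂ] X) (x : X) :
    Set X := {y | ∃ (α : ℂ) (n : ℕ), ‖α‖ ≤ 1 ∧ y = α • (T ^ n) x}

theorem stmt_4 {X : Type*} [NormedAddCommGroup X] [NormedSpace ℂ X] [CompleteSpace X]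
    [TopologicalSpace.SeparableSpace X]
    (T : X →L[ℂ] X) (M : Submodule ℂ X) (hMcl : IsClosed (M : Set X))
    (hMbot : M ≠ ⊥) (hMtop : M ≠ ⊤)
    (htrans : ∀ U V : Set X, U ⊆ (M : Set X) → V ⊆ (M : Set X) →
      U.Nonempty → V.Nonempty → RelOpenIn (M : Set X) U → RelOpenIn (M : Set X) V →
      ∃ (n : ℕ) (α : ℂ), 1 ≤ ‖α‖ ∧ ∃ G : Set X, G.Nonempty ∧
        RelOpenIn (M : Set X) G ∧ G ⊆ (⇑(T ^ n)) ⁻¹' (α • U) ∩ V) :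
    ∃ x : X, (M : Set X) ⊆ closure (diskOrb T x ∩ (M : Set X)) := by
  haveI : SecondCountableTopology X := UniformSpace.secondCountable_of_separable X
  haveI : CompleteSpace (M : Set X) := hMcl.completeSpace_coe
  haveI : Nonempty (M : Set X) := ⟨⟨0, M.zero_mem⟩⟩
  classical
  -- images of open sets of the subtype are relatively open
  have himg : ∀ U : Set (M : Set X), IsOpen U → RelOpenIn (M : Set X) (Subtype.val '' U) := by
    intro U hU
    rcases isOpen_induced_iff.mp hU with ⟨O, hO, hOU⟩
    refine ⟨O, hO, ?_⟩
    rw [← hOU, Subtype.image_preimage_coe, Set.inter_comm]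
  -- the open sets whose intersection will consist of diskcyclic vectors
  let A : ℕ → ℂ → Set (M : Set X) → Set (M : Set X) := fun n α B =>
    interior {z : (M : Set X) | α • (T ^ n) (z : X) ∈ Subtype.val '' B}
  let S : Set (Set (M : Set X)) :=
    (fun B => ⋃ n, ⋃ α : ℂ, ⋃ _ : ‖α‖ ≤ 1, A n α B) ''
      {B | B ∈ TopologicalSpace.countableBasis (M : Set X) ∧ B.Nonempty}
  have hSopen : ∀ s ∈ S, IsOpen s := by
    rintro s ⟨B, -, rfl⟩
    exact isOpen_iUnion fun n => isOpen_iUnion fun α => isOpen_iUnion fun _ => isOpen_interior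
  have hScount : S.Countable :=
    (((TopologicalSpace.countable_countableBasis (M : Set X)).mono
      (Set.sep_subset _ _))).image _
  have hSdense : ∀ s ∈ S, Dense s := by
    rintro s ⟨B, ⟨hB, hBne⟩, rfl⟩
    rw [dense_iff_inter_open]
    intro U hU hUne
    obtain ⟨n, α, hα, G, hGne, ⟨OG, hOG, hGeq⟩, hGsub⟩ :=
      htrans (Subtype.val '' B) (Subtype.val '' U)
        (Subtype.coe_image_subset _ _) (Subtype.coe_image_subset _ _)
        (hBne.image _) (hUne.image _)
        (himg B (TopologicalSpace.isOpen_of_mem_countableBasis hB)) (himg U hU)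
    have hα0 : α ≠ 0 := by
      intro h; rw [h, norm_zero] at hα; linarith
    -- any element of G comes from a point of U which lies in A n α⁻¹ B
    obtain ⟨g, hg⟩ := hGne
    have hgU : g ∈ Subtype.val '' U := (hGsub hg).2
    obtain ⟨u, huU, huv⟩ := hgU
    refine ⟨u, huU, ?_⟩
    refine Set.mem_iUnion.mpr ⟨n, Set.mem_iUnion.mpr ⟨α⁻¹, Set.mem_iUnion.mpr ⟨?_, ?_⟩⟩⟩
    · rw [norm_inv]
      exact inv_le_one_of_one_le₀ hα
    · -- u lies in the interior since Subtype.val ⁻¹' OG is an open neighborhood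
      have hsub : Subtype.val ⁻¹' OG ⊆
          {z : (M : Set X) | α⁻¹ • (T ^ n) (z : X) ∈ Subtype.val '' B} := by
        intro z hz
        have hzG : (z : X) ∈ G := by rw [hGeq]; exact ⟨hz, z.2⟩
        have h1 : (T ^ n) (z : X) ∈ α • (Subtype.val '' B) := (hGsub hzG).1
        obtain ⟨w, hwB, hww⟩ := Set.mem_smul_set.mp h1
        have : α⁻¹ • (T ^ n) (z : X) = w := by
          rw [← hww, smul_smul, inv_mul_cancel₀ hα0, one_smul]
        rw [Set.mem_setOf_eq, this]; exact hwB
      have huO : u ∈ Subtype.val ⁻¹' OG := by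
        have : g ∈ OG := by rw [hGeq] at hg; exact hg.1
        simpa [Set.mem_preimage, huv] using this
      exact interior_maximal hsub (hOG.preimage continuous_subtype_val) huO
  have hdense : Dense (⋂₀ S) := dense_sInter_of_isOpen hSopen hScount hSdense
  obtain ⟨x', hx'⟩ := hdense.nonempty
  refine ⟨(x' : X), ?_⟩
  intro y hy
  rw [mem_closure_iff]
  intro O hO hyO
  -- find a basis element around y inside O
  have hyO' : (⟨y, hy⟩ : (M : Set X)) ∈ Subtype.val ⁻¹' O := hyO
  obtain ⟨B, hB, hyB, hBO⟩ :=
    (TopologicalSpace.isBasis_countableBasis (M : Set X)).exists_subset_of_mem_open hyO'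
      (hO.preimage continuous_subtype_val)
  have hsS : (⋃ n, ⋃ α : ℂ, ⋃ _ : ‖α‖ ≤ 1, A n α B) ∈ S :=
    ⟨B, ⟨hB, ⟨_, hyB⟩⟩, rfl⟩
  have hx's := hx' _ hsS
  obtain ⟨n, α, hα, hxA⟩ : ∃ n, ∃ α : ℂ, ‖α‖ ≤ 1 ∧ x' ∈ A n α B := by
    simpa [Set.mem_iUnion] using hx's
  have hmem : α • (T ^ n) (x' : X) ∈ Subtype.val '' B := interior_subset (s := {z : (M : Set X) | α • (T ^ n) (z : X) ∈ Subtype.val '' B}) hxA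
  obtain ⟨w, hwB, hww⟩ := hmem
  refine ⟨α • (T ^ n) (x' : X), ?_, ⟨α, n, hα, rfl⟩, ?_⟩
  · rw [← hww]; exact hBO hwB
  · rw [← hww]; exact w.2
end

section
/- Subspace-diskcyclic criterion: Let T ∈ B(X), M a closed subspace of X. Suppose there exist an increasing sequence (n_k) of positive integers and dense subsets D₁, D₂ of M such that: (a) for every y ∈ D₂ there is a sequence (x_k) in M with ‖x_k‖ → 0 and T^{n_k} x_k → y; (b) ‖T^{n_k} x‖·‖x_k‖ → 0 for all x ∈ D₁; (c) T^{n_k}(M) ⊆ M for all k. Then T is M-diskcyclic. -/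
/-!
`M` is a complete separable metric space, so by Birkhoff's transitivity theorem it suffices that
the maps `α • T ^ n_k` (`‖α‖ ≤ 1`) restricted to `M` are topologically transitive. Given open `U`,
`V` meeting `M`, pick `d₁ ∈ D₁ ∩ U`, `d₂ ∈ D₂ ∩ V` and `x_k` as in (a) for `d₂`. Condition (b)
allows scalars `β_k ≥ 1` with `β_k ‖x_k‖ → 0` and `‖T ^ n_k d₁‖ / β_k → 0`; then
`w_k = d₁ + β_k x_k ∈ M` tends to `d₁` and `β_k⁻¹ T ^ n_k w_k = β_k⁻¹ T ^ n_k d₁ + T ^ n_k x_k`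
tends to `d₂`.
-/

open Filter Topology

open TopologicalSpace in
/-- Birkhoff's transitivity theorem. -/
theorem exists_dense_orbit_of_transitive {Y ι : Type*} [TopologicalSpace Y] [BaireSpace Y]
    [SecondCountableTopology Y] [Nonempty Y] (f : ι → Y → Y) (hf : ∀ i, Continuous (f i))
    (htrans : ∀ U V : Set Y, IsOpen U → IsOpen V → U.Nonempty → V.Nonempty →
      ∃ i, (U ∩ f i ⁻¹' V).Nonempty) :
    ∃ x, Dense (Set.range fun i => f i x) := by
  have hopen : ∀ V ∈ countableBasis Y, IsOpen (⋃ i, f i ⁻¹' V) := fun V hV =>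
    isOpen_iUnion fun i => (isOpen_of_mem_countableBasis hV).preimage (hf i)
  have hdense : ∀ V ∈ countableBasis Y, Dense (⋃ i, f i ⁻¹' V) := by
    intro V hV
    refine dense_iff_inter_open.mpr fun U hU hUne => ?_
    obtain ⟨i, x, hxU, hxV⟩ := htrans U V hU (isOpen_of_mem_countableBasis hV) hUne
      (nonempty_of_mem_countableBasis hV)
    exact ⟨x, hxU, Set.mem_iUnion.mpr ⟨i, hxV⟩⟩
  obtain ⟨x, hx⟩ := (dense_biInter_of_isOpen hopen (countable_countableBasis Y) hdense).nonempty
  refine ⟨x, (isBasis_countableBasis Y).dense_iff.mpr fun V hV _ => ?_⟩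
  obtain ⟨i, hi⟩ := Set.mem_iUnion.mp (Set.mem_iInter₂.mp hx V hV)
  exact ⟨f i x, hi, i, rfl⟩

theorem exists_one_le_tendsto_mul_and_div {a b : ℕ → ℝ} (ha : ∀ k, 0 ≤ a k)
    (hb : ∀ k, 0 ≤ b k) (hb0 : Tendsto b atTop (𝓝 0))
    (hab : Tendsto (fun k => a k * b k) atTop (𝓝 0)) :
    ∃ β : ℕ → ℝ, (∀ k, 1 ≤ β k) ∧ Tendsto (fun k => β k * b k) atTop (𝓝 0) ∧
      Tendsto (fun k => a k / β k) atTop (𝓝 0) := by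
  -- `β = max 1 (a / s)`; since `a * b ≤ s ^ 2`, `β * b ≤ b + s` and `a / β ≤ s`
  set s : ℕ → ℝ := fun k => √(a k * b k + 1 / (k + 1))
  have hq_pos : ∀ k, 0 < a k * b k + 1 / (k + 1) := fun k =>
    add_pos_of_nonneg_of_pos (mul_nonneg (ha k) (hb k)) Nat.one_div_pos_of_nat
  have hs_pos : ∀ k, 0 < s k := fun k => Real.sqrt_pos.mpr (hq_pos k)
  have hab_le : ∀ k, a k * b k ≤ s k * s k := fun k => by
    rw [Real.mul_self_sqrt (hq_pos k).le]
    linarith [Nat.one_div_pos_of_nat (α := ℝ) (n := k)]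
  have hs0 : Tendsto s atTop (𝓝 0) := by
    simpa [s] using (hab.add tendsto_one_div_add_atTop_nhds_zero_nat).sqrt
  refine ⟨fun k => max 1 (a k / s k), fun k => le_max_left _ _, ?_, ?_⟩
  · refine squeeze_zero (fun k => mul_nonneg (by positivity) (hb k)) (fun k => ?_)
      (by simpa using hb0.add hs0)
    have := hs_pos k
    calc max 1 (a k / s k) * b k ≤ (1 + a k / s k) * b k := by
          gcongr
          · exact hb k
          · exact max_le (by linarith [div_nonneg (ha k) this.le]) (by linarith)
      _ = b k + a k * b k / s k := by ring
      _ ≤ b k + s k := by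
          gcongr
          rw [div_le_iff₀ this]; exact hab_le k
  · refine squeeze_zero (fun k => div_nonneg (ha k) (by positivity)) (fun k => ?_) hs0
    have := hs_pos k
    rw [div_le_iff₀ (by positivity), ← div_le_iff₀' this]
    exact le_max_right _ _

theorem exists_tendsto_inv_smul_apply_add_smul {𝕜 X : Type*} [RCLike 𝕜] [NormedAddCommGroup X]
    [NormedSpace 𝕜 X] (S : ℕ → X →L[𝕜] X) {d y : X} {xs : ℕ → X}
    (hxs : Tendsto (fun k => ‖xs k‖) atTop (𝓝 0))
    (hSxs : Tendsto (fun k => S k (xs k)) atTop (𝓝 y))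
    (hSd : Tendsto (fun k => ‖S k d‖ * ‖xs k‖) atTop (𝓝 0)) :
    ∃ c : ℕ → 𝕜, (∀ k, ‖(c k)⁻¹‖ ≤ 1) ∧ Tendsto (fun k => d + c k • xs k) atTop (𝓝 d) ∧
      Tendsto (fun k => (c k)⁻¹ • S k (d + c k • xs k)) atTop (𝓝 y) := by
  obtain ⟨β, hβ1, hβxs, hSdβ⟩ :=
    exists_one_le_tendsto_mul_and_div (fun _ => norm_nonneg _) (fun _ => norm_nonneg _) hxs hSd
  have hβ0 : ∀ k, β k ≠ 0 := fun k => (zero_lt_one.trans_le (hβ1 k)).ne'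
  have hnorm : ∀ k, ‖(β k : 𝕜)‖ = β k := fun k => by
    rw [RCLike.norm_ofReal, abs_of_nonneg (zero_le_one.trans (hβ1 k))]
  refine ⟨fun k => β k, fun k => ?_, ?_, ?_⟩
  · rw [norm_inv, hnorm]
    exact inv_le_one_of_one_le₀ (hβ1 k)
  · have : Tendsto (fun k => (β k : 𝕜) • xs k) atTop (𝓝 0) := by
      rw [tendsto_zero_iff_norm_tendsto_zero]
      simpa only [norm_smul, hnorm] using hβxs
    simpa using tendsto_const_nhds.add this
  · have hsplit : ∀ k, (β k : 𝕜)⁻¹ • S k (d + (β k : 𝕜) • xs k) =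
        (β k : 𝕜)⁻¹ • S k d + S k (xs k) := by
      intro k
      rw [map_add, map_smul, smul_add, inv_smul_smul₀ (RCLike.ofReal_ne_zero.mpr (hβ0 k))]
    have : Tendsto (fun k => (β k : 𝕜)⁻¹ • S k d) atTop (𝓝 0) := by
      rw [tendsto_zero_iff_norm_tendsto_zero]
      simpa only [norm_smul, norm_inv, hnorm, inv_mul_eq_div] using hSdβ
    simpa only [hsplit, zero_add] using this.add hSxs

theorem exists_mem_inter_smul_apply_mem_of_criterion {𝕜 X : Type*} [RCLike 𝕜]
    [NormedAddCommGroup X] [NormedSpace 𝕜 X] (S : ℕ → X →L[𝕜] X) (M : Submodule 𝕜 X)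
    {D₁ D₂ : Set X} (hD₁ : D₁ ⊆ M) (hD₁dense : (M : Set X) ⊆ closure D₁)
    (hD₂dense : (M : Set X) ⊆ closure D₂)
    (hcrit : ∀ y ∈ D₂, ∃ xs : ℕ → X, (∀ k, xs k ∈ M) ∧
      Tendsto (fun k => ‖xs k‖) atTop (𝓝 0) ∧
      Tendsto (fun k => S k (xs k)) atTop (𝓝 y) ∧
      ∀ x ∈ D₁, Tendsto (fun k => ‖S k x‖ * ‖xs k‖) atTop (𝓝 0))
    {U V : Set X} (hU : IsOpen U) (hV : IsOpen V) (hUM : (U ∩ M).Nonempty)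
    (hVM : (V ∩ M).Nonempty) :
    ∃ w ∈ U ∩ M, ∃ k, ∃ α : 𝕜, ‖α‖ ≤ 1 ∧ α • S k w ∈ V := by
  obtain ⟨u, huU, huM⟩ := hUM
  obtain ⟨v, hvV, hvM⟩ := hVM
  obtain ⟨d₁, hd₁U, hd₁D⟩ := mem_closure_iff.mp (hD₁dense huM) U hU huU
  obtain ⟨d₂, hd₂V, hd₂D⟩ := mem_closure_iff.mp (hD₂dense hvM) V hV hvV
  obtain ⟨xs, hxsM, hxs, hSxs, hSd⟩ := hcrit d₂ hd₂D
  obtain ⟨c, hc, hw, hSw⟩ := exists_tendsto_inv_smul_apply_add_smul S hxs hSxs (hSd d₁ hd₁D)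
  obtain ⟨k, hkU, hkV⟩ :=
    ((hw.eventually (hU.mem_nhds hd₁U)).and (hSw.eventually (hV.mem_nhds hd₂V))).exists
  exact ⟨_, ⟨hkU, M.add_mem (hD₁ hd₁D) (M.smul_mem _ (hxsM k))⟩, k, _, hc k, hkV⟩

theorem stmt_5_general {X : Type*} [NormedAddCommGroup X] [NormedSpace ℂ X] [CompleteSpace X]
    [TopologicalSpace.SeparableSpace X]
    (T : X →L[ℂ] X) (M : Submodule ℂ X) (hMcl : IsClosed (M : Set X))
    (nk : ℕ → ℕ)
    (D₁ D₂ : Set X) (hD₁ : D₁ ⊆ (M : Set X))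
    (hD₁dense : (M : Set X) ⊆ closure D₁) (hD₂dense : (M : Set X) ⊆ closure D₂)
    (hcrit : ∀ y ∈ D₂, ∃ xs : ℕ → X, (∀ k, xs k ∈ M) ∧
      Tendsto (fun k => ‖xs k‖) atTop (𝓝 0) ∧
      Tendsto (fun k => (T ^ nk k) (xs k)) atTop (𝓝 y) ∧
      ∀ x ∈ D₁, Tendsto (fun k => ‖(T ^ nk k) x‖ * ‖xs k‖) atTop (𝓝 0))
    (hinv : ∀ k, ∀ m ∈ M, (T ^ nk k) m ∈ M) :
    ∃ x : X, (M : Set X) ⊆ closure (diskOrb T x ∩ (M : Set X)) := by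
  have : CompleteSpace M := hMcl.completeSpace_coe
  let f : ℕ × Metric.closedBall (0 : ℂ) 1 → M → M :=
    fun i x => ⟨(i.2 : ℂ) • (T ^ nk i.1) x, M.smul_mem _ (hinv _ _ x.2)⟩
  have hf : ∀ i, Continuous (f i) := fun i => by fun_prop
  have htrans : ∀ U V : Set M, IsOpen U → IsOpen V → U.Nonempty → V.Nonempty →
      ∃ i, (U ∩ f i ⁻¹' V).Nonempty := by
    rintro _ _ ⟨U, hU, rfl⟩ ⟨V, hV, rfl⟩ ⟨u, hu⟩ ⟨v, hv⟩
    obtain ⟨w, ⟨hwU, hwM⟩, k, α, hα, hwV⟩ :=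
      exists_mem_inter_smul_apply_mem_of_criterion (fun k => T ^ nk k) M hD₁ hD₁dense hD₂dense
        hcrit hU hV ⟨u, hu, u.2⟩ ⟨v, hv, v.2⟩
    exact ⟨(k, ⟨α, mem_closedBall_zero_iff.mpr hα⟩), ⟨w, hwM⟩, hwU, hwV⟩
  obtain ⟨x, hx⟩ := exists_dense_orbit_of_transitive f hf htrans
  refine ⟨x, (Subtype.dense_iff.mp hx).trans (closure_mono ?_)⟩
  rintro _ ⟨_, ⟨i, rfl⟩, rfl⟩
  exact ⟨⟨i.2, nk i.1, mem_closedBall_zero_iff.mp i.2.2, rfl⟩, (f i x).2⟩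

theorem stmt_5 {X : Type*} [NormedAddCommGroup X] [NormedSpace ℂ X] [CompleteSpace X]
    [TopologicalSpace.SeparableSpace X]
    (T : X →L[ℂ] X) (M : Submodule ℂ X) (hMcl : IsClosed (M : Set X))
    (hMbot : M ≠ ⊥) (hMtop : M ≠ ⊤)
    (nk : ℕ → ℕ) (hmono : StrictMono nk) (hpos : ∀ k, 0 < nk k)
    (D₁ D₂ : Set X) (hD₁ : D₁ ⊆ (M : Set X)) (hD₂ : D₂ ⊆ (M : Set X))
    (hD₁dense : (M : Set X) ⊆ closure D₁) (hD₂dense : (M : Set X) ⊆ closure D₂)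
    (hcrit : ∀ y ∈ D₂, ∃ xs : ℕ → X, (∀ k, xs k ∈ M) ∧
      Tendsto (fun k => ‖xs k‖) atTop (𝓝 0) ∧
      Tendsto (fun k => (T ^ nk k) (xs k)) atTop (𝓝 y) ∧
      ∀ x ∈ D₁, Tendsto (fun k => ‖(T ^ nk k) x‖ * ‖xs k‖) atTop (𝓝 0))
    (hinv : ∀ k, ∀ m ∈ M, (T ^ nk k) m ∈ M) :
    ∃ x : X, (M : Set X) ⊆ closure (diskOrb T x ∩ (M : Set X)) :=
  stmt_5_general T M hMcl nk D₁ D₂ hD₁ hD₁dense hD₂dense hcrit hinv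
end

section
/- Let T be a diskcyclic operator on X with diskcyclic vector x, and let I be the identity on ℂ². Then the operator S = T ⊕ I on X ⊕ ℂ² is N-diskcyclic for the subspace N = X ⊕ {0}, with N-diskcyclic vector (x, 0), but S is not diskcyclic on X ⊕ ℂ². -/
theorem stmt_6 {X : Type*} [NormedAddCommGroup X] [NormedSpace ℂ X] [CompleteSpace X]
    [TopologicalSpace.SeparableSpace X]
    (T : X →L[ℂ] X) (x : X) (hx : Dense (diskOrb T x))
    (S : X × EuclideanSpace ℂ (Fin 2) →L[ℂ] X × EuclideanSpace ℂ (Fin 2))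
    (hS : S = T.prodMap (ContinuousLinearMap.id ℂ (EuclideanSpace ℂ (Fin 2))))
    (N : Set (X × EuclideanSpace ℂ (Fin 2)))
    (hN : N = {p : X × EuclideanSpace ℂ (Fin 2) | p.2 = 0}) :
    (N ⊆ closure (diskOrb S (x, 0) ∩ N)) ∧ ¬ ∃ y, Dense (diskOrb S y) := by
  subst hS hN
  set E := EuclideanSpace ℂ (Fin 2)
  have hpow : ∀ (n : ℕ) (u : X) (v : E),
      ((T.prodMap (ContinuousLinearMap.id ℂ E)) ^ n) (u, v) = ((T ^ n) u, v) := by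
    intro n
    induction n with
    | zero => intro u v; simp
    | succ n ih =>
      intro u v
      rw [pow_succ, pow_succ, ContinuousLinearMap.mul_apply,
        ContinuousLinearMap.mul_apply]
      simpa using ih (T u) v
  constructor
  · intro p hp
    have hsub : ((fun u : X => (u, (0 : E))) '' diskOrb T x) ⊆
        diskOrb (T.prodMap (ContinuousLinearMap.id ℂ E)) (x, 0) ∩
          {p : X × E | p.2 = 0} := by
      rintro q ⟨u, ⟨α, n, hα, rfl⟩, rfl⟩
      refine ⟨⟨α, n, hα, ?_⟩, rfl⟩
      rw [hpow]
      simp [Prod.smul_def]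
    have hcl := image_closure_subset_closure_image
      (f := fun u : X => (u, (0 : E))) (s := diskOrb T x)
      (continuous_id.prodMk continuous_const)
    rw [hx.closure_eq] at hcl
    have hpmem : p ∈ (fun u : X => (u, (0 : E))) '' Set.univ := by
      refine ⟨p.1, trivial, ?_⟩
      have : p.2 = 0 := hp
      exact Prod.ext rfl this.symm
    exact closure_mono hsub (hcl hpmem)
  · rintro ⟨⟨u, v⟩, hd⟩
    have hsub : diskOrb (T.prodMap (ContinuousLinearMap.id ℂ E)) (u, v) ⊆
        {p : X × E | p.2 ∈ Submodule.span ℂ {v}} := by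
      rintro p ⟨α, n, hα, rfl⟩
      rw [hpow]
      exact Submodule.smul_mem _ α (Submodule.mem_span_singleton_self v)
    have hclosed : IsClosed {p : X × E | p.2 ∈ Submodule.span ℂ {v}} :=
      (Submodule.closed_of_finiteDimensional (Submodule.span ℂ {v})).preimage
        continuous_snd
    have hall : ∀ w : E, w ∈ Submodule.span ℂ {v} := by
      intro w
      have : ((0 : X), w) ∈ closure
          (diskOrb (T.prodMap (ContinuousLinearMap.id ℂ E)) (u, v)) := hd _
      exact (closure_minimal hsub hclosed) this
    have htop : Submodule.span ℂ ({v} : Set E) = ⊤ := Submodule.eq_top_iff'.mpr hall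
    have h1 : Module.finrank ℂ (Submodule.span ℂ ({v} : Set E)) ≤ 1 := by
      simpa using finrank_span_le_card ({v} : Set E)
    rw [htop] at h1
    simp [finrank_euclideanSpace, E] at h1
end

section
/- Let k ∈ ℂ with |k| > 1, T^{-1} = (1/k)·I on ℂ^n, x = (1,0,…,0), and M = {(a,0,…,0) : a ∈ ℂ}. Then the closure in M of 𝔻·Orb(T^{-1}, x) ∩ M has nonempty interior in M (it contains {(y,0,…,0) : |y| < 1}), yet 𝔻·Orb(T^{-1}, x) ∩ M is not dense in M; i.e., the disk orbit is somewhere dense but not everywhere dense in M. -/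
theorem stmt_15 (n : ℕ) (hn : 2 ≤ n) (k : ℂ) (hk : 1 < ‖k‖)
    (M : Set (EuclideanSpace ℂ (Fin n)))
    (hM : M = {v : EuclideanSpace ℂ (Fin n) | ∀ i : Fin n, i ≠ ⟨0, by omega⟩ → v i = 0})
    (x : EuclideanSpace ℂ (Fin n)) (hx : x = EuclideanSpace.single (⟨0, by omega⟩ : Fin n) (1 : ℂ))
    (D : Set (EuclideanSpace ℂ (Fin n)))
    (hD : D = {y | ∃ (α : ℂ) (m : ℕ), ‖α‖ ≤ 1 ∧ y = α • ((k⁻¹) ^ m • x)}) :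
    ({v : EuclideanSpace ℂ (Fin n) | ‖v‖ < 1} ∩ M ⊆ closure (D ∩ M)) ∧
      ¬ (M ⊆ closure (D ∩ M)) := by
  set i0 : Fin n := ⟨0, by omega⟩ with hi0
  have hsingle : ∀ v ∈ M, v = EuclideanSpace.single i0 (v i0) := by
    intro v hv
    rw [hM] at hv
    ext j
    rw [EuclideanSpace.single_apply]
    by_cases h : j = i0
    · subst h; simp
    · simp [h, hv j h]
  have hnormM : ∀ v ∈ M, ‖v‖ = ‖v i0‖ := by
    intro v hv
    conv_lhs => rw [hsingle v hv]
    rw [EuclideanSpace.norm_single]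
  have hxM : x ∈ M := by
    rw [hM, hx]
    intro i hi
    rw [EuclideanSpace.single_apply, if_neg hi]
  have hDM : D ⊆ M := by
    intro y hy
    rw [hD] at hy
    obtain ⟨α, m, hα, rfl⟩ := hy
    rw [hM]
    intro i hi
    have := hM ▸ hxM
    simp [PiLp.smul_apply, this i hi]
  constructor
  · intro v ⟨hv1, hv2⟩
    apply subset_closure
    refine ⟨?_, hv2⟩
    rw [hD]
    refine ⟨v i0, 0, ?_, ?_⟩
    · rw [← hnormM v hv2]; exact le_of_lt hv1
    · rw [pow_zero, one_smul, hx]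
      conv_lhs => rw [hsingle v hv2]
      ext j
      simp [EuclideanSpace.single_apply]
  · intro hsub
    have hk1 : ‖k⁻¹‖ ≤ 1 := by
      rw [norm_inv]
      exact inv_le_one_of_one_le₀ hk.le
    have hDball : D ⊆ Metric.closedBall 0 1 := by
      intro y hy
      rw [hD] at hy
      obtain ⟨α, m, hα, rfl⟩ := hy
      rw [Metric.mem_closedBall, dist_zero_right, norm_smul, norm_smul, norm_pow,
        hx, EuclideanSpace.norm_single, norm_one, mul_one]
      calc ‖α‖ * ‖k⁻¹‖ ^ m ≤ 1 * 1 := by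
            apply mul_le_mul hα (pow_le_one₀ (norm_nonneg _) hk1) (by positivity) zero_le_one
        _ = 1 := by ring
    have hcl : closure (D ∩ M) ⊆ Metric.closedBall 0 1 := by
      apply closure_minimal (fun y hy => hDball hy.1) Metric.isClosed_closedBall
    set w : EuclideanSpace ℂ (Fin n) := EuclideanSpace.single i0 (2 : ℂ) with hw
    have hwM : w ∈ M := by
      rw [hM]
      intro i hi
      rw [hw, EuclideanSpace.single_apply, if_neg hi]
    have := hcl (hsub hwM)
    rw [Metric.mem_closedBall, dist_zero_right, hw, EuclideanSpace.norm_single] at this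
    norm_num at this
end

section
/- For every n ≥ 2, the finite-dimensional Hilbert space ℂ^n supports a subspace-diskcyclic operator: there exist a bounded operator T on ℂ^n and a nontrivial subspace M such that T is M-diskcyclic (e.g., T = 2·I and M the first coordinate axis). -/
/-! Any eigenvector `x` whose eigenvalue `c` has `1 < ‖c‖` is disk-cyclic for its own line
`ℂ ∙ x`: a multiple `a • x` equals `(a / c ^ m) • T ^ m x`, and `‖a / c ^ m‖ ≤ 1` once `m` is
large. In dimension at least two a line is a nontrivial subspace, so `T = 2 • 1` works. -/

section DiskOrbit

variable {X : Type*} [NormedAddCommGroup X] [NormedSpace ℂ X]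

lemma ContinuousLinearMap.pow_apply_of_apply_eq_smul {T : X →L[ℂ] X} {c : ℂ} {x : X}
    (hx : T x = c • x) (m : ℕ) : (T ^ m) x = c ^ m • x := by
  induction m with
  | zero => simp
  | succ m ih => rw [pow_succ', mul_apply_eq_comp, ih, map_smul, hx, smul_smul, pow_succ]

lemma span_singleton_subset_diskOrb_of_apply_eq_smul {T : X →L[ℂ] X} {c : ℂ} {x : X}
    (hc : 1 < ‖c‖) (hx : T x = c • x) : ((ℂ ∙ x : Submodule ℂ X) : Set X) ⊆ diskOrb T x := by
  intro y hy
  obtain ⟨a, rfl⟩ := Submodule.mem_span_singleton.1 hy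
  obtain ⟨m, hm⟩ := pow_unbounded_of_one_lt ‖a‖ hc
  have hcm : c ^ m ≠ 0 := pow_ne_zero m (norm_pos_iff.1 (one_pos.trans hc))
  refine ⟨a / c ^ m, m, ?_, ?_⟩
  · rw [norm_div, norm_pow, div_le_one (by positivity)]
    exact hm.le
  · rw [T.pow_apply_of_apply_eq_smul hx, smul_smul, div_mul_cancel₀ a hcm]

lemma span_singleton_subset_closure_diskOrb_inter {T : X →L[ℂ] X} {c : ℂ} {x : X}
    (hc : 1 < ‖c‖) (hx : T x = c • x) :
    ((ℂ ∙ x : Submodule ℂ X) : Set X) ⊆ closure (diskOrb T x ∩ (ℂ ∙ x : Submodule ℂ X)) :=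
  fun _ hy ↦ subset_closure ⟨span_singleton_subset_diskOrb_of_apply_eq_smul hc hx hy, hy⟩

end DiskOrbit

lemma Submodule.span_singleton_ne_top_of_one_lt_finrank {K V : Type*} [DivisionRing K]
    [AddCommGroup V] [Module K V] [FiniteDimensional K V] {v : V} (hv : v ≠ 0)
    (hV : 1 < Module.finrank K V) : (K ∙ v) ≠ ⊤ := by
  intro h
  have := finrank_span_singleton (K := K) hv
  rw [h, finrank_top] at this
  omega

lemma exists_subspace_diskcyclic {X : Type*} [NormedAddCommGroup X] [NormedSpace ℂ X]
    [FiniteDimensional ℂ X] (hX : 1 < Module.finrank ℂ X) :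
    ∃ (T : X →L[ℂ] X) (M : Submodule ℂ X), M ≠ ⊥ ∧ M ≠ ⊤ ∧
      ∃ x : X, (M : Set X) ⊆ closure (diskOrb T x ∩ (M : Set X)) := by
  have : Nontrivial X := Module.nontrivial_of_finrank_pos (one_pos.trans hX)
  obtain ⟨x, hx⟩ := exists_ne (0 : X)
  have hc : 1 < ‖(2 : ℂ)‖ := by norm_num
  refine ⟨(2 : ℂ) • 1, ℂ ∙ x, ?_, Submodule.span_singleton_ne_top_of_one_lt_finrank hx hX, x,
    span_singleton_subset_closure_diskOrb_inter hc rfl⟩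
  exact mt Submodule.span_singleton_eq_bot.1 hx

theorem stmt_16 (n : ℕ) (hn : 2 ≤ n) :
    ∃ (T : EuclideanSpace ℂ (Fin n) →L[ℂ] EuclideanSpace ℂ (Fin n))
      (M : Submodule ℂ (EuclideanSpace ℂ (Fin n))), M ≠ ⊥ ∧ M ≠ ⊤ ∧
        ∃ x : EuclideanSpace ℂ (Fin n),
          (M : Set (EuclideanSpace ℂ (Fin n))) ⊆
            closure (diskOrb T x ∩ (M : Set (EuclideanSpace ℂ (Fin n)))) :=
  exists_subspace_diskcyclic (by rw [finrank_euclideanSpace_fin]; omega)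
end
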